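/- The uncertain-evidence fraction never decreases under discounting: for opinions ω₁, ω₂ with positive component sums, γ(Δ(ω₁, ω₂))/(component sum of Δ(ω₁, ω₂)) ≥ γ₂/(α₂+β₂+γ₂), where γ denotes the third component. -/

import Mathlib

structure Opinion where
  a : ℝ
  b : ℝ
  c : ℝ

noncomputable def disc (x y : Opinion) : Opinion :=
  let s := x.a + x.b + x.c
  ⟨x.a * y.a / s, x.a * y.b / s, ((x.b + x.c) * (y.a + y.b + y.c) + x.a * y.c) / s⟩

def comb (x y : Opinion) : Opinion := ⟨x.a + y.a, x.b + y.b, x.c + y.c⟩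

def osum (x : Opinion) : ℝ := x.a + x.b + x.c

theorem osum_disc {x : Opinion} (hx : osum x ≠ 0) (y : Opinion) :
    osum (disc x y) = osum y := by
  unfold osum at hx
  simp only [osum, disc]
  field_simp
  ring

theorem disc_c_sub_c {x : Opinion} (hx : osum x ≠ 0) (y : Opinion) :
    (disc x y).c - y.c = (x.b + x.c) * (y.a + y.b) / osum x := by
  unfold osum at hx ⊢
  simp only [disc]
  field_simp
  ring

theorem c_le_disc_c {x y : Opinion} (hx : 0 < osum x) (hxb : 0 ≤ x.b) (hxc : 0 ≤ x.c)
    (hya : 0 ≤ y.a) (hyb : 0 ≤ y.b) : y.c ≤ (disc x y).c := by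
  have hgain : 0 ≤ (x.b + x.c) * (y.a + y.b) / osum x := by positivity
  rw [← disc_c_sub_c hx.ne'] at hgain
  exact sub_nonneg.mp hgain

theorem stmt17_general (w1 w2 : Opinion)
    (h1b : 0 ≤ w1.b) (h1c : 0 ≤ w1.c)
    (h2a : 0 ≤ w2.a) (h2b : 0 ≤ w2.b)
    (h1 : 0 < osum w1) (h2 : 0 < osum w2) :
    w2.c / (w2.a + w2.b + w2.c) ≤ (disc w1 w2).c / osum (disc w1 w2) := by
  change w2.c / osum w2 ≤ _
  rw [osum_disc h1.ne']
  exact div_le_div_of_nonneg_right (c_le_disc_c h1 h1b h1c h2a h2b) h2.le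

theorem stmt17 (w1 w2 : Opinion)
    (h1a : 0 ≤ w1.a) (h1b : 0 ≤ w1.b) (h1c : 0 ≤ w1.c)
    (h2a : 0 ≤ w2.a) (h2b : 0 ≤ w2.b) (h2c : 0 ≤ w2.c)
    (h1 : 0 < osum w1) (h2 : 0 < osum w2) :
    w2.c / (w2.a + w2.b + w2.c) ≤ (disc w1 w2).c / osum (disc w1 w2) :=
  stmt17_general w1 w2 h1b h1c h2a h2b h1 h2
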